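/- arXiv:2409.17614 — 4 statements merged into one kernel-verified Lean document; each statement's English description precedes it below -/
import Mathlib

section
/- For any graph G, the (α(G)−1)-bounded chromatic number satisfies χ_{α(G)−1}(G) ≤ χ(G) + X, where X is the number of independent sets of G of size exactly α(G). -/
open Finset

/-- The `t`-bounded chromatic number: the least number of colours in a proper colouring
in which every colour class has at most `t` vertices. -/
noncomputable def boundedChromaticNumber {V : Type*} [Fintype V] (G : SimpleGraph V)
    (t : ℕ) : ℕ :=
  sInf {k : ℕ | ∃ c : V → Fin k,
    (∀ v w, G.Adj v w → c v ≠ c w) ∧ ∀ i : Fin k, Set.ncard {v | c v = i} ≤ t}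

/-- The independence number of `G`. -/
noncomputable def indepNumber {V : Type*} [Fintype V] (G : SimpleGraph V) : ℕ :=
  sSup {a : ℕ | ∃ s : Finset V, s.card = a ∧ Gᶜ.IsClique (s : Set V)}

/-!
Take a proper colouring with `χ(G)` colours. Its colour classes are independent, so they have
at most `α(G)` vertices, and those with exactly `α(G)` vertices are distinct maximum independent
sets, so there are at most `X` of them. Moving one vertex of each such class into a new
singleton class gives a proper colouring with at most `χ(G) + X` classes, each of size at most
`α(G) - 1`.
-/

namespace SimpleGraph

variable {V ι : Type*} {G : SimpleGraph V}

lemma indepNumber_eq_indepNum [Fintype V] (G : SimpleGraph V) : indepNumber G = G.indepNum := by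
  simp only [indepNumber, indepNum, isNIndepSet_iff, isClique_compl, and_comm]

lemma IsIndepSet.ncard_le_indepNum [Finite V] {s : Set V} (hs : G.IsIndepSet s) :
    s.ncard ≤ G.indepNum := by
  obtain ⟨s, rfl⟩ := s.toFinite.exists_finset_coe
  rw [Set.ncard_coe_finset]
  exact hs.card_le_indepNum

lemma Coloring.card_filter_ncard_colorClass_eq_le [Finite V] [Fintype ι] (C : G.Coloring ι)
    {n : ℕ} (hn : 0 < n) :
    #{i | (C.colorClass i).ncard = n} ≤
      {s : Finset V | #s = n ∧ G.IsIndepSet (s : Set V)}.ncard := by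
  classical
  rw [← Set.ncard_coe_finset]
  refine Set.ncard_le_ncard_of_injOn (fun i => (C.colorClass i).toFinite.toFinset) ?_ ?_ ?_
  · intro i hi
    simp only [coe_filter, mem_univ, true_and, Set.mem_ofPred_eq] at hi
    simp [← Set.ncard_eq_toFinset_card _ (C.colorClass i).toFinite, hi, C.isIndepSet_colorClass]
  · intro i hi j _ hij
    simp only [coe_filter, mem_univ, true_and, Set.mem_ofPred_eq] at hi
    obtain ⟨v, hv⟩ := (Set.ncard_pos (C.colorClass i).toFinite).mp (hi ▸ hn)
    have hclass : C.colorClass i = C.colorClass j := Set.Finite.toFinset_inj.mp hij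
    exact hv.symm.trans (hclass ▸ hv : v ∈ C.colorClass j)
  · exact Set.toFinite _

lemma Coloring.exists_finset_ncard_colorClass_sdiff_le [Finite V] [Fintype ι] (C : G.Coloring ι)
    {n : ℕ} (hC : ∀ i, (C.colorClass i).ncard ≤ n + 1) :
    ∃ R : Finset V, #R = #{i | (C.colorClass i).ncard = n + 1} ∧
      ∀ i, (C.colorClass i \ R).ncard ≤ n := by
  classical
  set F : Finset ι := {i | (C.colorClass i).ncard = n + 1}
  have hsurj : Set.SurjOn C Set.univ F := by
    intro i hi
    simp only [F, coe_filter, mem_univ, true_and, Set.mem_ofPred_eq] at hi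
    obtain ⟨v, hv⟩ := (Set.ncard_pos (C.colorClass i).toFinite).mp (by omega)
    exact ⟨v, trivial, hv⟩
  obtain ⟨R, -, hinj, himage⟩ := exists_subset_injOn_image_eq_of_surjOn _ F hsurj
  refine ⟨R, himage ▸ (card_image_of_injOn hinj).symm, fun i => ?_⟩
  by_cases hi : i ∈ F
  · obtain ⟨v, hvR, rfl⟩ := mem_image.mp (himage ▸ hi)
    calc (C.colorClass (C v) \ R).ncard ≤ (C.colorClass (C v) \ {v}).ncard :=
          Set.ncard_le_ncard (Set.sdiff_subset_sdiff_right (by simpa using hvR))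
      _ = (C.colorClass (C v)).ncard - 1 := Set.ncard_sdiff_singleton_of_mem (C.mem_colorClass v)
      _ ≤ n := by have := hC (C v); omega
  · simp only [F, mem_filter, mem_univ, true_and] at hi
    have := hC i
    exact (Set.ncard_le_ncard Set.sdiff_subset).trans (by omega)

end SimpleGraph

open SimpleGraph

section BoundedChromaticNumber

variable {V ι : Type*} [Fintype V] {G : SimpleGraph V}

/-- For nonempty `V` no colouring has only empty classes, and `sInf ∅ = 0`. -/
lemma boundedChromaticNumber_zero (G : SimpleGraph V) : boundedChromaticNumber G 0 = 0 := by
  refine Nat.sInf_eq_zero.mpr ?_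
  cases isEmpty_or_nonempty V with
  | inl _ => exact .inl ⟨isEmptyElim, isEmptyElim, fun i => isEmptyElim i⟩
  | inr hV =>
    obtain ⟨v⟩ := hV
    refine .inr (Set.eq_empty_of_forall_notMem fun k ⟨c, _, hc⟩ =>
      (Set.ncard_ne_zero_of_mem (s := {w | c w = c v}) rfl) (Nat.le_zero.mp (hc (c v))))

lemma boundedChromaticNumber_le_card [Fintype ι] {t : ℕ} (c : V → ι)
    (hc : ∀ v w, G.Adj v w → c v ≠ c w) (ht : ∀ i, {v | c v = i}.ncard ≤ t) :
    boundedChromaticNumber G t ≤ Fintype.card ι := by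
  let e := Fintype.equivFin ι
  refine Nat.sInf_le ⟨e ∘ c, fun v w hvw => e.injective.ne (hc v w hvw), fun j => ?_⟩
  simp only [Function.comp_apply, ← Equiv.eq_symm_apply]
  exact ht (e.symm j)

lemma boundedChromaticNumber_le_card_add_card [Fintype ι] {t : ℕ} (ht : 1 ≤ t)
    (C : G.Coloring ι) (R : Finset V) (hC : ∀ i, (C.colorClass i \ R).ncard ≤ t) :
    boundedChromaticNumber G t ≤ Fintype.card ι + #R := by
  classical
  let c : V → ι ⊕ R := fun v => if h : v ∈ R then .inr ⟨v, h⟩ else .inl (C v)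
  have hc : ∀ v w, G.Adj v w → c v ≠ c w := by
    intro v w hvw
    by_cases hv : v ∈ R <;> by_cases hw : w ∈ R <;>
      simp [c, hv, hw, G.ne_of_adj hvw, C.valid hvw]
  have hclass : ∀ j, {v | c v = j}.ncard ≤ t := by
    rintro (i | ⟨v, hv⟩)
    · convert hC i using 2
      ext w
      by_cases hw : w ∈ R <;> simp [c, hw, Coloring.colorClass]
    · convert ht
      rw [Set.ncard_eq_one]
      refine ⟨v, Set.ext fun w => ?_⟩
      by_cases hw : w ∈ R <;> simp [c, hw]
      rintro rfl
      exact hw hv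
  simpa using boundedChromaticNumber_le_card c hc hclass

lemma boundedChromaticNumber_le_card_add_card_filter [Fintype ι] {n : ℕ} (hn : 1 ≤ n)
    (C : G.Coloring ι) (hC : ∀ i, (C.colorClass i).ncard ≤ n + 1) :
    boundedChromaticNumber G n ≤ Fintype.card ι + #{i | (C.colorClass i).ncard = n + 1} := by
  obtain ⟨R, hR, hCR⟩ := C.exists_finset_ncard_colorClass_sdiff_le hC
  exact hR ▸ boundedChromaticNumber_le_card_add_card hn C R hCR

end BoundedChromaticNumber

/-- `χ_{α(G)-1}(G) ≤ χ(G) + X`, where `X` is the number of independent sets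
of size exactly `α(G)`. -/
theorem boundedChromatic_le_chromatic_add {V : Type*} [Fintype V] (G : SimpleGraph V) :
    (boundedChromaticNumber G (indepNumber G - 1) : ℕ∞) ≤
      G.chromaticNumber +
        Set.ncard {s : Finset V | s.card = indepNumber G ∧ Gᶜ.IsClique (s : Set V)} := by
  simp only [indepNumber_eq_indepNum, isClique_compl]
  set α := G.indepNum
  obtain ht | ht := (α - 1).eq_zero_or_pos
  · simp [ht, boundedChromaticNumber_zero]
  have hα : α - 1 + 1 = α := by omega
  obtain ⟨C⟩ := G.colorable_chromaticNumber_of_fintype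
  have hC : ∀ i, (C.colorClass i).ncard ≤ α - 1 + 1 := fun i => by
    rw [hα]
    exact (C.isIndepSet_colorClass i).ncard_le_indepNum
  calc (boundedChromaticNumber G (α - 1) : ℕ∞)
      ≤ ((G.chromaticNumber.toNat + #{i | (C.colorClass i).ncard = α} : ℕ) : ℕ∞) := by
        exact_mod_cast hα ▸ Fintype.card_fin _ ▸
          boundedChromaticNumber_le_card_add_card_filter ht C hC
    _ ≤ G.chromaticNumber + {s : Finset V | #s = α ∧ G.IsIndepSet (s : Set V)}.ncard := by
        push_cast
        gcongr
        · exact ENat.natCast_toNat_le_self _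
        · exact C.card_filter_ncard_colorClass_eq_le (by omega)
end

section
/- Let k ≥ 1 and let π, π' be ordered partitions of [n] into k parts each, all parts of size at least 2, and suppose π and π' have exactly ℓ parts in common (as sets). Then in G(n,1/2), P(π and π' are both cocolourings) ≤ 2^{2k−ℓ} · P(π and π' are both proper colourings). -/
noncomputable def unifProb (n : ℕ) (S : Set (SimpleGraph (Fin n))) : ℝ :=
  (S.ncard : ℝ) / 2 ^ n.choose 2

def IsOrderedPartition (n k : ℕ) (π : Fin k → Finset (Fin n)) : Prop :=
  (∀ i j, i ≠ j → Disjoint (π i) (π j)) ∧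
    (∀ v : Fin n, ∃ i, v ∈ π i) ∧ ∀ i, 2 ≤ (π i).card

/-!
Let `F` be the family of distinct parts of `π` and `π'`, so `#F ≤ 2k - ℓ`. Sort the graphs in which
every member of `F` is a clique or independent by the subfamily `T ⊆ F` of members that are
cliques: there are `2 ^ #F` classes. On one class, deleting every edge inside a member of `F` is
injective, because the deleted edges are prescribed by `T`, and it produces a graph in which every
member of `F` is independent.
-/

namespace SimpleGraph

variable {V : Type*}

def blockGraph (F : Finset (Finset V)) : SimpleGraph V :=
  fromRel fun u v => ∃ t ∈ F, u ∈ t ∧ v ∈ t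

def cocolouringEvent (F : Finset (Finset V)) : Set (SimpleGraph V) :=
  {G | ∀ t ∈ F, G.IsClique (t : Set V) ∨ Gᶜ.IsClique (t : Set V)}

def colouringEvent (F : Finset (Finset V)) : Set (SimpleGraph V) :=
  {G | ∀ t ∈ F, Gᶜ.IsClique (t : Set V)}

def patternEvent (F T : Finset (Finset V)) : Set (SimpleGraph V) :=
  {G | ∀ t ∈ F, (t ∈ T → G.IsClique (t : Set V)) ∧ (t ∉ T → Gᶜ.IsClique (t : Set V))}

lemma adj_iff_of_mem_patternEvent {F T : Finset (Finset V)} {G : SimpleGraph V}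
    (hG : G ∈ patternEvent F T) {t : Finset V} (ht : t ∈ F) {u v : V} (hu : u ∈ t) (hv : v ∈ t)
    (huv : u ≠ v) : G.Adj u v ↔ t ∈ T := by
  by_cases hT : t ∈ T
  · exact iff_of_true ((hG t ht).1 hT hu hv huv) hT
  · exact iff_of_false (fun h => ((hG t ht).2 hT hu hv huv).2 h) hT

lemma sdiff_blockGraph_mem_colouringEvent (F : Finset (Finset V)) (G : SimpleGraph V) :
    G \ blockGraph F ∈ colouringEvent F := by
  intro t ht u hu v hv huv
  simp only [compl_adj, sdiff_adj, blockGraph, fromRel_adj]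
  exact ⟨huv, fun h => h.2 ⟨huv, Or.inl ⟨t, ht, hu, hv⟩⟩⟩

lemma inf_blockGraph_eq_of_mem_patternEvent {F T : Finset (Finset V)} {G G' : SimpleGraph V}
    (hG : G ∈ patternEvent F T) (hG' : G' ∈ patternEvent F T) :
    G ⊓ blockGraph F = G' ⊓ blockGraph F := by
  ext u v
  simp only [inf_adj, blockGraph, fromRel_adj]
  refine and_congr_left fun ⟨huv, hblock⟩ => ?_
  obtain ⟨t, ht, hu, hv⟩ | ⟨t, ht, hv, hu⟩ := hblock
  · rw [adj_iff_of_mem_patternEvent hG ht hu hv huv, adj_iff_of_mem_patternEvent hG' ht hu hv huv]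
  · rw [adj_comm G, adj_comm G', adj_iff_of_mem_patternEvent hG ht hv hu huv.symm,
      adj_iff_of_mem_patternEvent hG' ht hv hu huv.symm]

lemma ncard_patternEvent_le [Finite V] (F T : Finset (Finset V)) :
    (patternEvent F T).ncard ≤ (colouringEvent F).ncard := by
  refine Set.ncard_le_ncard_of_injOn (· \ blockGraph F)
    (fun G _ => sdiff_blockGraph_mem_colouringEvent F G)
    fun G hG G' hG' (hsdiff : G \ blockGraph F = G' \ blockGraph F) => ?_
  rw [← sup_inf_sdiff G (blockGraph F), ← sup_inf_sdiff G' (blockGraph F),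
    inf_blockGraph_eq_of_mem_patternEvent hG hG', hsdiff]

lemma cocolouringEvent_subset_biUnion_patternEvent (F : Finset (Finset V)) :
    cocolouringEvent F ⊆ ⋃ T ∈ F.powerset, patternEvent F T := by
  classical
  intro G hG
  refine Set.mem_biUnion (x := F.filter fun t : Finset V => G.IsClique (t : Set V))
    (Finset.mem_coe.2 (Finset.mem_powerset.2 (Finset.filter_subset _ _))) fun t ht => ?_
  simp only [Finset.mem_filter, ht, true_and]
  exact ⟨id, (hG t ht).resolve_left⟩

lemma ncard_cocolouringEvent_le [Finite V] (F : Finset (Finset V)) :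
    (cocolouringEvent F).ncard ≤ 2 ^ F.card * (colouringEvent F).ncard :=
  calc (cocolouringEvent F).ncard
      ≤ (⋃ T ∈ F.powerset, patternEvent F T).ncard :=
        Set.ncard_le_ncard (cocolouringEvent_subset_biUnion_patternEvent F)
    _ ≤ ∑ T ∈ F.powerset, (patternEvent F T).ncard := F.powerset.set_ncard_biUnion_le _
    _ ≤ ∑ _T ∈ F.powerset, (colouringEvent F).ncard :=
        Finset.sum_le_sum fun T _ => ncard_patternEvent_le F T
    _ = 2 ^ F.card * (colouringEvent F).ncard := by
        rw [Finset.sum_const, Finset.card_powerset, smul_eq_mul]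

end SimpleGraph

lemma unifProb_le_mul_of_ncard_le {n : ℕ} {S T : Set (SimpleGraph (Fin n))} {c : ℕ}
    (h : S.ncard ≤ c * T.ncard) : unifProb n S ≤ c * unifProb n T := by
  rw [unifProb, unifProb, ← mul_div_assoc]
  gcongr
  exact_mod_cast h

theorem prob_pair_cocolouring_le_general (n k ℓ : ℕ)
    (π π' : Fin k → Finset (Fin n))
    (hℓ : ℓ = Set.ncard {s : Finset (Fin n) | (∃ i, π i = s) ∧ ∃ j, π' j = s}) :
    unifProb n {G | (∀ i, G.IsClique (π i : Set (Fin n)) ∨ Gᶜ.IsClique (π i : Set (Fin n))) ∧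
        ∀ j, G.IsClique (π' j : Set (Fin n)) ∨ Gᶜ.IsClique (π' j : Set (Fin n))} ≤
      2 ^ (2 * k - ℓ) *
        unifProb n {G | (∀ i, Gᶜ.IsClique (π i : Set (Fin n))) ∧
          ∀ j, Gᶜ.IsClique (π' j : Set (Fin n))} := by
  classical
  set A := Finset.univ.image π
  set B := Finset.univ.image π'
  have hℓ_inter : ℓ = (A ∩ B).card := by
    rw [hℓ, ← Set.ncard_coe_finset]
    congr 1
    ext s
    simp [A, B]
  have hcard_union : (A ∪ B).card ≤ 2 * k - ℓ := by
    have hA : A.card ≤ k := Finset.card_image_le.trans (Finset.card_fin k).le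
    have hB : B.card ≤ k := Finset.card_image_le.trans (Finset.card_fin k).le
    have := Finset.card_union_add_card_inter A B
    omega
  have hcoco := SimpleGraph.ncard_cocolouringEvent_le (A ∪ B)
  simp only [SimpleGraph.cocolouringEvent, SimpleGraph.colouringEvent, Finset.mem_union,
    or_imp, forall_and, A, B, Finset.mem_image, Finset.mem_univ, true_and, forall_exists_index,
    forall_apply_eq_imp_iff] at hcoco
  exact_mod_cast unifProb_le_mul_of_ncard_le
    (hcoco.trans (Nat.mul_le_mul_right _ (Nat.pow_le_pow_right two_pos hcard_union)))

/-- If `π, π'` are ordered partitions of `[n]` into `k` parts of size at least 2 with exactly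
`ℓ` parts in common, then
`P(π and π' are both cocolourings) ≤ 2^(2k-ℓ) · P(π and π' are both colourings)`. -/
theorem prob_pair_cocolouring_le (n k ℓ : ℕ) (hk : 1 ≤ k)
    (π π' : Fin k → Finset (Fin n))
    (hπ : IsOrderedPartition n k π) (hπ' : IsOrderedPartition n k π')
    (hℓ : ℓ = Set.ncard {s : Finset (Fin n) | (∃ i, π i = s) ∧ ∃ j, π' j = s}) :
    unifProb n {G | (∀ i, G.IsClique (π i : Set (Fin n)) ∨ Gᶜ.IsClique (π i : Set (Fin n))) ∧
        ∀ j, G.IsClique (π' j : Set (Fin n)) ∨ Gᶜ.IsClique (π' j : Set (Fin n))} ≤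
      2 ^ (2 * k - ℓ) *
        unifProb n {G | (∀ i, Gᶜ.IsClique (π i : Set (Fin n))) ∧
          ∀ j, Gᶜ.IsClique (π' j : Set (Fin n))} :=
  prob_pair_cocolouring_le_general n k ℓ π π' hℓ
end

section
/- Let p ∈ (0,1) be a constant, N = C(n,2), m = Np + O(1), and let x = x(n) = o(n^{4/3}). Then C(N−x, m)/C(N, m) ∼ q^x · exp(−(b−1)x²/n²) as n → ∞, where q = 1−p and b = 1/q. -/
/-!
Dividing `C(N - x, m) / C(N, m) = ∏_{i < x} (N - m - i) / (N - i)` by `q^x`, the `i`-th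
factor becomes `1 - tᵢ` with `tᵢ = (m - Np + p i) / (q (N - i)) = O((1 + i) / N)`. Hence the
logarithm of the ratio is `-∑ tᵢ + O(x (1 + x)² / N²)`, and
`∑ tᵢ = p x² / (2qN) + O(x / N + x³ / N²)`; all error terms vanish once `x³ = o(N²)`.
For `N = C(n, 2)` this is `x = o(n^{4/3})`, and `p x² / (2qN) - p x² / (q n²) = O(x² / n³)`
also vanishes; finally `p / q = b - 1`.
-/

open Filter Finset Real Topology

theorem Nat.choose_mul_choose_sub_comm {k M X : ℕ} :
    k.choose X * (k - X).choose M = k.choose M * (k - M).choose X := by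
  have h1 := Nat.choose_mul (n := k) (k := M + X) (s := X) (by omega)
  have h2 := Nat.choose_mul (n := k) (k := M + X) (s := M) (by omega)
  rw [Nat.add_sub_cancel] at h1
  rw [Nat.add_sub_cancel_left, Nat.choose_symm_add] at h2
  rw [← h1, ← h2]

theorem Nat.cast_descFactorial_eq_prod_range {K : Type*} [CommRing K] {n X : ℕ} (h : X ≤ n) :
    (n.descFactorial X : K) = ∏ i ∈ range X, ((n : K) - i) := by
  rw [Nat.descFactorial_eq_prod_range, Nat.cast_prod]
  exact prod_congr rfl fun i hi => Nat.cast_sub (by grind)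

theorem cast_choose_sub_div_cast_choose {K : Type*} [Field K] [CharZero K] {k M X : ℕ}
    (h : M + X ≤ k) :
    ((k - X).choose M : K) / k.choose M = ∏ i ∈ range X, ((k : K) - M - i) / (k - i) := by
  have hdesc : (k - X).choose M * k.descFactorial X = (k - M).descFactorial X * k.choose M := by
    rw [Nat.descFactorial_eq_factorial_mul_choose, Nat.descFactorial_eq_factorial_mul_choose]
    linear_combination X.factorial * (Nat.choose_mul_choose_sub_comm (k := k) (M := M) (X := X))
  have hk : (k.choose M : K) ≠ 0 := by exact_mod_cast (Nat.choose_pos (by omega)).ne'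
  have hX : (k.descFactorial X : K) ≠ 0 := by
    exact_mod_cast (Nat.descFactorial_pos.mpr (by omega)).ne'
  rw [prod_div_distrib, ← Nat.cast_descFactorial_eq_prod_range (by omega),
    ← Nat.cast_sub (show M ≤ k by omega), ← Nat.cast_descFactorial_eq_prod_range (by omega),
    div_eq_div_iff hk hX]
  exact_mod_cast hdesc

theorem cast_choose_sub_div_cast_choose_eq_exp {p : ℝ} (hp1 : p < 1) {N m X : ℕ}
    (h : m + X ≤ N) (c : ℝ) :
    ((N - X).choose m : ℝ) / N.choose m / ((1 - p) ^ X * exp (-c))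
      = exp (∑ i ∈ range X, log ((N - m - i) / ((1 - p) * (N - i))) + c) := by
  have hpos : ∀ i ∈ range X, 0 < ((N : ℝ) - m - i) / ((1 - p) * (N - i)) := fun i hi => by
    have : (m + i : ℝ) < N := by exact_mod_cast (by grind : m + i < N)
    have : (0 : ℝ) ≤ m := m.cast_nonneg
    exact div_pos (by linarith) (mul_pos (by linarith) (by linarith))
  rw [exp_add, exp_sum, prod_congr rfl fun i hi => exp_log (hpos i hi),
    cast_choose_sub_div_cast_choose h, exp_neg, div_mul_eq_div_div, div_inv_eq_mul]
  simp_rw [div_mul_eq_div_div_swap, prod_div_distrib, prod_const, card_range]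

theorem sum_range_natCast {K : Type*} [Field K] [CharZero K] (n : ℕ) :
    ∑ i ∈ range n, (i : K) = n * (n - 1) / 2 := by
  induction n with
  | zero => simp
  | succ n ih => rw [sum_range_succ, ih]; push_cast; ring

theorem abs_log_one_sub_add_le {t : ℝ} (ht : |t| ≤ 1 / 2) :
    |log (1 - t) + t| ≤ 2 * t ^ 2 := by
  have h := abs_log_sub_add_sum_range_le (ht.trans_lt (by norm_num)) 1
  simp only [range_one, sum_singleton, zero_add, pow_one, Nat.cast_zero, div_one, Nat.reduceAdd,
    sq_abs] at h
  calc |log (1 - t) + t| = |t + log (1 - t)| := by rw [add_comm]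
    _ ≤ t ^ 2 / (1 - |t|) := h
    _ ≤ t ^ 2 / (1 / 2) := by gcongr; linarith
    _ = 2 * t ^ 2 := by ring

theorem abs_sum_le_card_mul {ι : Type*} {s : Finset ι} {f : ι → ℝ} {c : ℝ}
    (h : ∀ i ∈ s, |f i| ≤ c) : |∑ i ∈ s, f i| ≤ #s * c :=
  (abs_sum_le_sum_abs f s).trans (by simpa using sum_le_card_nsmul s _ c h)

theorem abs_sum_log_one_sub_add_sum_le {ι : Type*} {s : Finset ι} {t : ι → ℝ} {ε : ℝ}
    (ht : ∀ i ∈ s, |t i| ≤ ε) (hε : ε ≤ 1 / 2) :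
    |∑ i ∈ s, log (1 - t i) + ∑ i ∈ s, t i| ≤ #s * (2 * ε ^ 2) := by
  rw [← sum_add_distrib]
  refine abs_sum_le_card_mul fun i hi => (abs_log_one_sub_add_le ((ht i hi).trans hε)).trans ?_
  have := sq_le_sq' (abs_le.mp (ht i hi)).1 (abs_le.mp (ht i hi)).2
  linarith

noncomputable def factorDefect (p N m : ℝ) (i : ℕ) : ℝ :=
  (m - N * p + p * i) / ((1 - p) * (N - i))

section FactorDefect

variable {p N m D : ℝ} {X : ℕ}

theorem div_eq_one_sub_factorDefect (hp1 : p < 1) {i : ℕ} (hi : (i : ℝ) < N) :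
    (N - m - i) / ((1 - p) * (N - i)) = 1 - factorDefect p N m i := by
  have : (1 - p) * (N - i) ≠ 0 := by nlinarith
  rw [factorDefect, eq_sub_iff_add_eq, ← add_div, div_eq_one_iff_eq this]
  ring

theorem abs_factorDefect_le (hp0 : 0 ≤ p) (hp1 : p < 1) (hN : 0 < N) (hm : |m - N * p| ≤ D)
    (hXN : 2 * X ≤ N) {i : ℕ} (hi : i ≤ X) :
    |factorDefect p N m i| ≤ 2 * (D + p * X) / ((1 - p) * N) := by
  have hiX : (i : ℝ) ≤ X := by exact_mod_cast hi
  have hden : (1 - p) * N / 2 ≤ (1 - p) * (N - i) := by nlinarith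
  have hpi : p * i ≤ p * X := mul_le_mul_of_nonneg_left hiX hp0
  have hnum : |m - N * p + p * i| ≤ D + p * X :=
    (abs_add_le _ _).trans (by rw [abs_of_nonneg (by positivity : 0 ≤ p * i)]; linarith)
  calc |factorDefect p N m i| = |m - N * p + p * i| / ((1 - p) * (N - i)) := by
        rw [factorDefect, abs_div, abs_of_pos (show 0 < (1 - p) * (N - i) by nlinarith)]
    _ ≤ (D + p * X) / ((1 - p) * N / 2) := by
        gcongr
        linarith [abs_nonneg (m - N * p + p * i)]
    _ = 2 * (D + p * X) / ((1 - p) * N) := by field_simp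

theorem abs_sum_factorDefect_sub_le (hp0 : 0 ≤ p) (hp1 : p < 1) (hN : 0 < N)
    (hm : |m - N * p| ≤ D) (hXN : X ≤ N) {s : ℝ}
    (hs : ∀ i ∈ range X, |factorDefect p N m i| ≤ s) :
    |∑ i ∈ range X, factorDefect p N m i - p * X ^ 2 / (2 * (1 - p) * N)|
      ≤ X * (s * (X / N)) + (D + p / 2) * X / ((1 - p) * N) := by
  have hq : 0 < 1 - p := by linarith
  -- replacing `N - i` by `N` costs the relative error `i / N` and leaves an explicit sum
  have hshift : ∀ i ∈ range X, factorDefect p N m i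
      = factorDefect p N m i * (i / N) + (m - N * p + p * i) / ((1 - p) * N) := by
    intro i hi
    have : (i : ℝ) < N := (Nat.cast_lt.mpr (mem_range.mp hi)).trans_le hXN
    rw [factorDefect]
    field_simp [(sub_pos.mpr this).ne']
    ring
  calc _ = |∑ i ∈ range X, factorDefect p N m i * (i / N)
        + X * (m - N * p - p / 2) / ((1 - p) * N)| := by
        rw [sum_congr rfl hshift, sum_add_distrib, ← sum_div, sum_add_distrib, sum_const,
          card_range, ← mul_sum, sum_range_natCast X]
        congr 1
        field_simp
        ring
    _ ≤ _ := (abs_add_le _ _).trans (add_le_add ?_ ?_)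
  · refine (abs_sum_le_card_mul (c := s * (X / N)) fun i hi => ?_).trans_eq
      (by rw [card_range])
    have hiX : (i : ℝ) / N ≤ X / N := by
      gcongr; exact_mod_cast (mem_range.mp hi).le
    rw [abs_mul, abs_of_nonneg (by positivity : (0 : ℝ) ≤ i / N)]
    exact mul_le_mul (hs i hi) hiX (by positivity) ((abs_nonneg _).trans (hs i hi))
  · have hd : |m - N * p - p / 2| ≤ D + p / 2 :=
      (abs_sub _ _).trans (by rw [abs_of_nonneg (by positivity : 0 ≤ p / 2)]; linarith)
    rw [abs_div, abs_mul, abs_of_pos (by positivity : 0 < (1 - p) * N), Nat.abs_cast, mul_comm]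
    gcongr

theorem abs_sum_log_div_add_le (hp0 : 0 ≤ p) (hp1 : p < 1) (hN : 0 < N) (hm : |m - N * p| ≤ D)
    (hXN : 2 * X ≤ N) {s : ℝ} (hs : 2 * (D + p * X) / ((1 - p) * N) ≤ s) (hs' : s ≤ 1 / 2) :
    |∑ i ∈ range X, log ((N - m - i) / ((1 - p) * (N - i))) + p * X ^ 2 / (2 * (1 - p) * N)|
      ≤ X * (2 * s ^ 2) + X * (s * (X / N)) + (D + p / 2) * X / ((1 - p) * N) := by
  have hX0 : (0 : ℝ) ≤ X := X.cast_nonneg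
  have hlt : ∀ i ∈ range X, (i : ℝ) < N := fun i hi =>
    (Nat.cast_lt.mpr (mem_range.mp hi)).trans_le (by linarith)
  have ht : ∀ i ∈ range X, |factorDefect p N m i| ≤ s := fun i hi =>
    (abs_factorDefect_le hp0 hp1 hN hm hXN (mem_range.mp hi).le).trans hs
  have hlog := abs_sum_log_one_sub_add_sum_le ht hs'
  have hsum := abs_sum_factorDefect_sub_le hp0 hp1 hN hm (by linarith) ht
  rw [card_range] at hlog
  rw [sum_congr rfl fun i hi => by rw [div_eq_one_sub_factorDefect hp1 (hlt i hi)]]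
  calc _ = |(∑ i ∈ range X, log (1 - factorDefect p N m i)
          + ∑ i ∈ range X, factorDefect p N m i)
        - (∑ i ∈ range X, factorDefect p N m i - p * X ^ 2 / (2 * (1 - p) * N))| := by ring_nf
    _ ≤ _ := (abs_sub _ _).trans (by linarith)

theorem tendsto_nhds_zero_of_tendsto_pow {ι : Type*} {l : Filter ι} {f : ι → ℝ}
    (hf : ∀ i, 0 ≤ f i) {k : ℕ} (hk : k ≠ 0) (h : Tendsto (fun i => f i ^ k) l (𝓝 0)) :
    Tendsto f l (𝓝 0) := by
  simpa [pow_rpow_inv_natCast (hf _) hk] using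
    h.rpow_const_nhds_zero (p := (k : ℝ)⁻¹) (by positivity)

theorem tendsto_pow_div_pow_of_tendsto_div_rpow {ι : Type*} {l : Filter ι} {f g : ι → ℝ}
    {r : ℝ} (hf : ∀ i, 0 ≤ f i) (hg : ∀ᶠ i in l, 1 ≤ g i)
    (h : Tendsto (fun i => f i / g i ^ r) l (𝓝 0)) {a b : ℕ} (ha : a ≠ 0)
    (hab : r * a ≤ b) :
    Tendsto (fun i => f i ^ a / g i ^ b) l (𝓝 0) := by
  refine squeeze_zero' (hg.mono fun i hgi => by have := hf i; positivity) ?_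
    (by simpa [ha] using h.pow a)
  filter_upwards [hg] with i hgi
  rw [div_pow, ← rpow_natCast (g i ^ r), ← rpow_mul (by linarith), ← rpow_natCast (g i) b]
  gcongr
  exact pow_nonneg (hf i) a

theorem tendsto_cast_choose_sub_div_cast_choose_div {ι : Type*} {l : Filter ι} {p D : ℝ}
    (hp0 : 0 ≤ p) (hp1 : p < 1) {N m X : ι → ℕ} (hm : ∀ n, |(m n : ℝ) - N n * p| ≤ D)
    (hN : Tendsto (fun n => (N n : ℝ)) l atTop)
    (hX : Tendsto (fun n => (X n : ℝ) ^ 3 / (N n : ℝ) ^ 2) l (𝓝 0)) :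
    Tendsto (fun n => ((N n - X n).choose (m n) : ℝ) / (N n).choose (m n)
        / ((1 - p) ^ X n * exp (-(p * X n ^ 2 / (2 * (1 - p) * N n))))) l (𝓝 1) := by
  have hq : 0 < 1 - p := by linarith
  have hinv : Tendsto (fun n => (N n : ℝ)⁻¹) l (𝓝 0) := hN.inv_tendsto_atTop
  have hy : Tendsto (fun n => (X n : ℝ) / N n) l (𝓝 0) := by
    refine tendsto_nhds_zero_of_tendsto_pow (fun n => by positivity) three_ne_zero ?_
    simpa using (hX.mul hinv).congr fun n => by ring
  have hbound : Tendsto (fun n =>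
      (X n : ℝ) * (2 * (2 * (D + p * X n) / ((1 - p) * N n)) ^ 2)
        + X n * (2 * (D + p * X n) / ((1 - p) * N n) * (X n / N n))
        + (D + p / 2) * X n / ((1 - p) * N n)) l (𝓝 0) := by
    have h := ((((hy.mul hinv).const_mul (8 * D ^ 2 / (1 - p) ^ 2)).add
      ((hy.pow 2).const_mul (16 * D * p / (1 - p) ^ 2 + 2 * D / (1 - p)))).add
      (hX.const_mul (8 * p ^ 2 / (1 - p) ^ 2 + 2 * p / (1 - p)))).add
      (hy.const_mul ((D + p / 2) / (1 - p)))
    simp only [mul_zero, zero_pow two_ne_zero, add_zero] at h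
    exact h.congr fun n => by simp only [div_eq_mul_inv, mul_inv, ← inv_pow]; ring
  have hsmall : ∀ᶠ n in l, 4 * (D + X n) ≤ (1 - p) * N n := by
    have h := (hinv.const_mul (4 * D)).add (hy.const_mul 4)
    simp only [mul_zero, add_zero] at h
    filter_upwards [h.eventually_le_const hq, hN.eventually_gt_atTop 0] with n hn hNn
    calc 4 * (D + X n) = (4 * D * (N n : ℝ)⁻¹ + 4 * (X n / N n)) * N n := by field_simp
      _ ≤ (1 - p) * N n := by gcongr
  have hexponent : Tendsto (fun n =>
      ∑ i ∈ range (X n), log ((N n - m n - i) / ((1 - p) * (N n - i)))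
        + p * X n ^ 2 / (2 * (1 - p) * N n)) l (𝓝 0) := by
    refine squeeze_zero_norm' ?_ hbound
    filter_upwards [hsmall, hN.eventually_gt_atTop 0] with n hn hNn
    have hD : 0 ≤ D := (abs_nonneg _).trans (hm n)
    have hpX : p * X n ≤ X n := mul_le_of_le_one_left (by positivity) hp1.le
    refine abs_sum_log_div_add_le hp0 hp1 hNn (hm n) (by nlinarith) le_rfl ?_
    rw [div_le_iff₀ (by positivity)]
    linarith
  have hmX : ∀ᶠ n in l, m n + X n ≤ N n := by
    filter_upwards [hsmall] with n hn
    have hD : 0 ≤ D := (abs_nonneg _).trans (hm n)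
    have hmN := (abs_le.mp (hm n)).2
    exact_mod_cast (show (m n + X n : ℝ) ≤ N n by nlinarith)
  have hlim := (continuous_exp.tendsto 0).comp hexponent
  rw [exp_zero] at hlim
  exact hlim.congr' (hmX.mono fun n h => (cast_choose_sub_div_cast_choose_eq_exp hp1 h _).symm)

theorem sq_div_four_le_cast_choose_two {n : ℕ} (hn : 2 ≤ n) :
    (n : ℝ) ^ 2 / 4 ≤ n.choose 2 := by
  have : (2 : ℝ) ≤ n := by exact_mod_cast hn
  rw [Nat.cast_choose_two]
  nlinarith

theorem tendsto_cast_choose_two_atTop : Tendsto (fun n : ℕ => (n.choose 2 : ℝ)) atTop atTop :=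
  tendsto_atTop_mono' _ ((eventually_ge_atTop 2).mono fun _ => sq_div_four_le_cast_choose_two)
    (((tendsto_pow_atTop two_ne_zero).comp tendsto_natCast_atTop_atTop).atTop_div_const
      (by norm_num))

theorem tendsto_div_cast_choose_two_sq {f : ℕ → ℝ}
    (h : Tendsto (fun n => f n / (n : ℝ) ^ 4) atTop (𝓝 0)) :
    Tendsto (fun n => f n / (n.choose 2 : ℝ) ^ 2) atTop (𝓝 0) := by
  refine squeeze_zero_norm' ?_ (by simpa using h.norm.const_mul 16)
  filter_upwards [eventually_ge_atTop 2] with n hn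
  have hn4 := sq_div_four_le_cast_choose_two hn
  have : (0 : ℝ) < n := by exact_mod_cast (by omega : 0 < n)
  rw [Real.norm_eq_abs, abs_div, abs_pow, Nat.abs_cast]
  calc |f n| / (n.choose 2 : ℝ) ^ 2 ≤ |f n| / ((n : ℝ) ^ 2 / 4) ^ 2 := by gcongr
    _ = 16 * (|f n| / (n : ℝ) ^ 4) := by ring

theorem tendsto_div_sq_sub_div_two_mul_cast_choose_two {f : ℕ → ℝ}
    (h : Tendsto (fun n => f n / (n : ℝ) ^ 3) atTop (𝓝 0)) :
    Tendsto (fun n => f n / (n : ℝ) ^ 2 - f n / (2 * n.choose 2)) atTop (𝓝 0) := by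
  refine squeeze_zero_norm' ?_ (by simpa using h.norm.const_mul 2)
  filter_upwards [eventually_ge_atTop 2] with n hn
  have : (2 : ℝ) ≤ n := by exact_mod_cast hn
  have : (0 : ℝ) < n - 1 := by linarith
  have hdiff : f n / (n : ℝ) ^ 2 - f n / (2 * n.choose 2) = -(f n / (n ^ 2 * (n - 1))) := by
    rw [Nat.cast_choose_two]
    field_simp
    ring
  rw [hdiff, norm_neg, Real.norm_eq_abs, abs_div,
    abs_of_pos (by positivity : (0 : ℝ) < n ^ 2 * (n - 1))]
  calc |f n| / (n ^ 2 * (n - 1)) ≤ |f n| / (n ^ 3 / 2) := by gcongr; nlinarith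
    _ = 2 * (|f n| / (n : ℝ) ^ 3) := by ring

theorem div_mul_exp_eq {A Q a b c : ℝ} (h : c = -(a + b)) :
    A / (Q * exp (-a)) * exp b = A / (Q * exp c) := by
  rw [h, neg_add', exp_sub, ← mul_div_assoc, div_div_eq_mul_div, div_mul_eq_mul_div]

/-- Lemma 3.7 of Heckel–Panagiotou: if `p ∈ (0,1)` is constant, `N = C(n,2)`,
`m = Np + O(1)` and `x = o(n^{4/3})`, then
`C(N−x, m)/C(N, m) ∼ q^x · exp(−(b−1)x²/n²)` where `q = 1−p`, `b = 1/q`. -/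
theorem binomial_ratio_asymptotic (p : ℝ) (hp : p ∈ Set.Ioo (0 : ℝ) 1)
    (m x : ℕ → ℕ)
    (hm : ∃ C : ℝ, ∀ n : ℕ, |(m n : ℝ) - (n.choose 2 : ℝ) * p| ≤ C)
    (hx : Tendsto (fun n : ℕ => (x n : ℝ) / (n : ℝ) ^ ((4 : ℝ) / 3)) atTop (nhds 0)) :
    Tendsto (fun n : ℕ =>
        (((n.choose 2 - x n).choose (m n) : ℝ) / ((n.choose 2).choose (m n) : ℝ)) /
          ((1 - p) ^ x n *
            Real.exp (-(1 / (1 - p) - 1) * (x n : ℝ) ^ 2 / (n : ℝ) ^ 2)))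
      atTop (nhds 1) := by
  obtain ⟨hp0, hp1⟩ := hp
  obtain ⟨C, hC⟩ := hm
  have hpow {a b : ℕ} (ha : a ≠ 0) (hab : 4 / 3 * (a : ℝ) ≤ b) :=
    tendsto_pow_div_pow_of_tendsto_div_rpow (fun n => (x n).cast_nonneg)
      ((eventually_ge_atTop 1).mono fun n hn => by exact_mod_cast hn) hx ha hab
  have hX3 := tendsto_div_cast_choose_two_sq
    (hpow (a := 3) (b := 4) three_ne_zero (by norm_num))
  have hcorr := (tendsto_div_sq_sub_div_two_mul_cast_choose_two
    (hpow (a := 2) (b := 3) two_ne_zero (by norm_num))).const_mul (p / (1 - p))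
  rw [mul_zero] at hcorr
  have key := (tendsto_cast_choose_sub_div_cast_choose_div hp0.le hp1 hC
    tendsto_cast_choose_two_atTop hX3).mul ((continuous_exp.tendsto 0).comp hcorr)
  rw [exp_zero, mul_one] at key
  refine key.congr fun n => div_mul_exp_eq ?_
  have : 1 - p ≠ 0 := by linarith
  field_simp
  ring
end FactorDefect
end

section
/- Let X_k count ordered colourings with profile k in G(n,1/2) and X_k^co count ordered cocolourings with profile k, with k₁ = 0 and k = Σ_u k_u parts. Then E[(X_k^co)²] ≤ 2^{2k} · E[X_k²]. -/
open Finset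

/-- `kk` is a `k`-profile on `[n]`: `Σ_u kk u = k`, `Σ_u u·kk u ≤ n`,
supported on sizes `1 ≤ u ≤ n`. -/
def IsProfile (n k : ℕ) (kk : ℕ → ℕ) : Prop :=
  (∑ u ∈ Icc 1 n, kk u = k) ∧ (∑ u ∈ Icc 1 n, u * kk u ≤ n) ∧
    ∀ u, u ∉ Icc 1 n → kk u = 0

/-- `π` is an ordered partial partition of `[n]` with profile `kk`: pairwise disjoint
parts, decreasing in size, with exactly `kk u` parts of size `u` for every `u`. -/
def HasProfile (n k : ℕ) (kk : ℕ → ℕ) (π : Fin k → Finset (Fin n)) : Prop :=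
  (∀ i j, i ≠ j → Disjoint (π i) (π j)) ∧
    (∀ i j, i ≤ j → (π j).card ≤ (π i).card) ∧
    ∀ u, Set.ncard {i : Fin k | (π i).card = u} = kk u

/-- The number of ordered partial partitions with profile `kk` all of whose parts are
independent sets of `G`. -/
noncomputable def numColourings (n k : ℕ) (kk : ℕ → ℕ) (G : SimpleGraph (Fin n)) : ℕ :=
  Set.ncard {π : Fin k → Finset (Fin n) |
    HasProfile n k kk π ∧ ∀ i, Gᶜ.IsClique (π i : Set (Fin n))}

/-- The number of ordered partial partitions with profile `kk` all of whose parts are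
cliques or independent sets of `G`. -/
noncomputable def numCocolourings (n k : ℕ) (kk : ℕ → ℕ) (G : SimpleGraph (Fin n)) : ℕ :=
  Set.ncard {π : Fin k → Finset (Fin n) |
    HasProfile n k kk π ∧
      ∀ i, G.IsClique (π i : Set (Fin n)) ∨ Gᶜ.IsClique (π i : Set (Fin n))}

/-!
Fix two ordered partitions `π, π'` and a graph `G` in which all their parts are cliques or
independent sets. Let `H` be the union of the complete graphs on those parts that are cliques
of `G`. Then `H ≤ G`, every part of `π` and of `π'` is independent in `G \ H`, and
`G = (G \ H) ⊔ H`, where `H` depends only on which of the `2k` parts are cliques. So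
`G ↦ (clique pattern, G \ H)` is injective, and at most `2 ^ (2k)` times as many graphs make
`π, π'` both cocolourings as make them both colourings. Summing over the pairs `(π, π')` bounds
the second moment.
-/

open Classical

lemma Finset.sum_sq_card_filter {α β : Type*} [Fintype α] (S : Finset β) (p : α → β → Prop) :
    ∑ a, #{b ∈ S | p a b} ^ 2 = ∑ b ∈ S, ∑ b' ∈ S, #{a | p a b ∧ p a b'} := by
  simp_rw [sq, card_filter, sum_mul_sum, ite_zero_mul_ite_zero, mul_one]
  rw [sum_comm]
  exact sum_congr rfl fun b _ => sum_comm

namespace SimpleGraph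

variable {V ι : Type*}

def IsCocolouring (G : SimpleGraph V) (P : ι → Set V) : Prop :=
  ∀ i, G.IsClique (P i) ∨ Gᶜ.IsClique (P i)

def IsColouring (G : SimpleGraph V) (P : ι → Set V) : Prop :=
  ∀ i, Gᶜ.IsClique (P i)

def cliquePattern (G : SimpleGraph V) (P : ι → Set V) : Set ι :=
  {i | G.IsClique (P i)}

def cliqueUnion (s : Set ι) (P : ι → Set V) : SimpleGraph V :=
  fromRel fun x y => ∃ i ∈ s, x ∈ P i ∧ y ∈ P i

lemma isClique_cliqueUnion {s : Set ι} {i : ι} (P : ι → Set V) (hi : i ∈ s) :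
    (cliqueUnion s P).IsClique (P i) :=
  fun _ hx _ hy hxy => (fromRel_adj _ _ _).2 ⟨hxy, Or.inl ⟨i, hi, hx, hy⟩⟩

lemma cliqueUnion_le {G : SimpleGraph V} {s : Set ι} {P : ι → Set V}
    (hs : ∀ i ∈ s, G.IsClique (P i)) : cliqueUnion s P ≤ G := by
  intro x y hxy
  obtain ⟨hne, ⟨i, hi, hx, hy⟩ | ⟨i, hi, hy, hx⟩⟩ := (fromRel_adj _ _ _).1 hxy
  exacts [hs i hi hx hy hne, hs i hi hx hy hne]

lemma cliqueUnion_cliquePattern_le (G : SimpleGraph V) (P : ι → Set V) :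
    cliqueUnion (G.cliquePattern P) P ≤ G :=
  cliqueUnion_le fun _ hi => hi

lemma isClique_compl_sdiff {G H : SimpleGraph V} {t : Set V} (ht : H.IsClique t) :
    (G \ H)ᶜ.IsClique t :=
  fun _ hx _ hy hxy => (compl_adj _ _ _).2 ⟨hxy, fun h => h.2 (ht hx hy hxy)⟩

lemma IsCocolouring.isColouring_sdiff_cliqueUnion {G : SimpleGraph V} {P : ι → Set V}
    (hG : G.IsCocolouring P) : (G \ cliqueUnion (G.cliquePattern P) P).IsColouring P := by
  intro i
  rcases hG i with hclique | hindep
  · exact isClique_compl_sdiff (isClique_cliqueUnion P hclique)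
  · exact hindep.mono (compl_le_compl sdiff_le)

lemma isCocolouring_sumElim {G : SimpleGraph V} {P Q : ι → Set V} :
    G.IsCocolouring (Sum.elim P Q) ↔ G.IsCocolouring P ∧ G.IsCocolouring Q :=
  Sum.forall

lemma isColouring_sumElim {G : SimpleGraph V} {P Q : ι → Set V} :
    G.IsColouring (Sum.elim P Q) ↔ G.IsColouring P ∧ G.IsColouring Q :=
  Sum.forall

variable [Fintype V] [DecidableEq V] [Fintype ι]

theorem card_isCocolouring_le (P : ι → Set V) :
    #{G : SimpleGraph V | G.IsCocolouring P} ≤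
      2 ^ Fintype.card ι * #{G : SimpleGraph V | G.IsColouring P} := by
  calc #{G : SimpleGraph V | G.IsCocolouring P}
      ≤ #((univ : Finset (Set ι)) ×ˢ ({G | G.IsColouring P} : Finset (SimpleGraph V))) := by
        refine card_le_card_of_injOn
          (fun G => (G.cliquePattern P, G \ cliqueUnion (G.cliquePattern P) P))
          (fun G hG => ?_) (fun G₁ _ G₂ _ hG => ?_)
        · simpa using (mem_filter.1 hG).2.isColouring_sdiff_cliqueUnion
        · obtain ⟨hpattern, hsdiff⟩ := Prod.mk.inj hG
          rw [← sdiff_sup_cancel (cliqueUnion_cliquePattern_le G₁ P),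
            ← sdiff_sup_cancel (cliqueUnion_cliquePattern_le G₂ P), hsdiff, hpattern]
    _ = 2 ^ Fintype.card ι * #{G : SimpleGraph V | G.IsColouring P} := by
        rw [card_product, card_univ, Fintype.card_set]

theorem card_isCocolouring_pair_le (P Q : ι → Set V) :
    #{G : SimpleGraph V | G.IsCocolouring P ∧ G.IsCocolouring Q} ≤
      2 ^ (2 * Fintype.card ι) * #{G : SimpleGraph V | G.IsColouring P ∧ G.IsColouring Q} := by
  simpa only [isCocolouring_sumElim, isColouring_sumElim, Fintype.card_sum, two_mul] using
    card_isCocolouring_le (Sum.elim P Q)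

theorem sum_sq_card_isCocolouring_le {β : Type*} (S : Finset β) (P : β → ι → Set V) :
    ∑ G : SimpleGraph V, #{b ∈ S | G.IsCocolouring (P b)} ^ 2 ≤
      2 ^ (2 * Fintype.card ι) * ∑ G : SimpleGraph V, #{b ∈ S | G.IsColouring (P b)} ^ 2 := by
  simp_rw [sum_sq_card_filter, mul_sum]
  exact sum_le_sum fun b _ => sum_le_sum fun b' _ => card_isCocolouring_pair_le (P b) (P b')

end SimpleGraph

theorem second_moment_cocolourings_le_general (n k : ℕ) (kk : ℕ → ℕ) :
    (∑ G : SimpleGraph (Fin n), (numCocolourings n k kk G : ℝ) ^ 2) / 2 ^ n.choose 2 ≤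
      2 ^ (2 * k) *
        ((∑ G : SimpleGraph (Fin n), (numColourings n k kk G : ℝ) ^ 2) / 2 ^ n.choose 2) := by
  let S : Finset (Fin k → Finset (Fin n)) := {π | HasProfile n k kk π}
  let parts (π : Fin k → Finset (Fin n)) (i : Fin k) : Set (Fin n) := π i
  have hco (G) : numCocolourings n k kk G = #{π ∈ S | G.IsCocolouring (parts π)} := by
    rw [numCocolourings, ← Set.ncard_coe_finset, filter_filter, coe_filter]
    simp only [mem_univ, true_and]
    rfl
  have hcol (G) : numColourings n k kk G = #{π ∈ S | G.IsColouring (parts π)} := by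
    rw [numColourings, ← Set.ncard_coe_finset, filter_filter, coe_filter]
    simp only [mem_univ, true_and]
    rfl
  have hnat := SimpleGraph.sum_sq_card_isCocolouring_le S parts
  rw [Fintype.card_fin] at hnat
  rw [← mul_div_assoc]
  gcongr
  simp only [hco, hcol]
  exact_mod_cast hnat

/-- `E[(X_k^co)²] ≤ 2^{2k} · E[X_k²]` for a profile with no singleton parts. -/
theorem second_moment_cocolourings_le (n k : ℕ) (kk : ℕ → ℕ) (h : IsProfile n k kk)
    (h1 : kk 1 = 0) :
    (∑ G : SimpleGraph (Fin n), (numCocolourings n k kk G : ℝ) ^ 2) / 2 ^ n.choose 2 ≤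
      2 ^ (2 * k) *
        ((∑ G : SimpleGraph (Fin n), (numColourings n k kk G : ℝ) ^ 2) / 2 ^ n.choose 2) :=
  second_moment_cocolourings_le_general n k kk
end
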